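/- arXiv:1310.5377 — 2 statements merged into one kernel-verified Lean document; each statement's English description precedes it below -/
import Mathlib

section
/- Let 0 < α < 1. For every integer p ≥ 1, the absolute value of the generalized binomial coefficient satisfies |C(1−α, p)| ≤ e^((1−α)^2 + (1−α)) / p^(2−α). -/
/-!
Since `Γ(x + 1) = x Γ(x)`, the Gamma quotient is `∏_{j<p} |j - β| / p!` with `β = 1 - α`.
For `0 ≤ β ≤ 1` Bernoulli's inequality `(1 + 1/n)^β ≤ 1 + β/n` gives
`(n - β) (n + 1)^(1+β) ≤ (n + 1) n^(1+β)`, so inductively `∏_{j<p} |j - β| · p^(1+β) ≤ p!`.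
Hence `|C(1-α, p)| ≤ p^(α-2)`, and the exponential factor is at least `1`.
-/

open Finset Real

theorem Real.Gamma_add_nat_eq_mul_prod {x : ℝ} (hx : ∀ m : ℕ, x ≠ -m) (n : ℕ) :
    Gamma (x + n) = Gamma x * ∏ j ∈ range n, (x + j) := by
  induction n with
  | zero => simp
  | succ n ih =>
    have hxn : x + n ≠ 0 := fun h => hx n (by linarith)
    rw [prod_range_succ, Nat.cast_succ, ← add_assoc, Gamma_add_one hxn, ih]
    ring

theorem sub_mul_add_one_rpow_le {n β : ℝ} (hn : 0 < n) (hβ0 : 0 ≤ β) (hβn : β ≤ n)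
    (hβ1 : β ≤ 1) : (n - β) * (n + 1) ^ (1 + β) ≤ (n + 1) * n ^ (1 + β) := by
  have hbern : (n + 1) ^ β ≤ (1 + β / n) * n ^ β := by
    have h := rpow_one_add_le_one_add_mul_self (s := 1 / n)
      (by linarith [one_div_pos.mpr hn]) hβ0 hβ1
    rw [one_add_div hn.ne', div_rpow (by linarith) hn.le, div_le_iff₀ (by positivity)] at h
    simpa [div_eq_mul_inv] using h
  have hquad : (n - β) * (1 + β / n) ≤ n := by
    have : (n - β) * (1 + β / n) = n - β ^ 2 / n := by field_simp; ring
    rw [this]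
    linarith [div_nonneg (sq_nonneg β) hn.le]
  rw [rpow_add (by linarith), rpow_add hn, rpow_one, rpow_one]
  calc (n - β) * ((n + 1) * (n + 1) ^ β)
      = (n + 1) * ((n - β) * (n + 1) ^ β) := by ring
    _ ≤ (n + 1) * ((n - β) * ((1 + β / n) * n ^ β)) := by gcongr
    _ = (n + 1) * (((n - β) * (1 + β / n)) * n ^ β) := by ring
    _ ≤ (n + 1) * (n * n ^ β) := by gcongr

open scoped Nat in
theorem prod_abs_nat_sub_mul_rpow_le_factorial {β : ℝ} (hβ0 : 0 ≤ β) (hβ1 : β ≤ 1) (p : ℕ) :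
    (∏ j ∈ range p, |(j : ℝ) - β|) * (p : ℝ) ^ (1 + β) ≤ p ! := by
  rcases p with _ | p
  · simp [zero_rpow (by linarith : 1 + β ≠ 0)]
  induction p with
  | zero => simpa [abs_of_nonneg hβ0] using hβ1
  | succ k ih =>
    set P := ∏ j ∈ range (k + 1), |(j : ℝ) - β|
    have hP : 0 ≤ P := prod_nonneg fun j _ => abs_nonneg _
    have hβk : β ≤ (k : ℝ) + 1 := by linarith [(k.cast_nonneg : (0 : ℝ) ≤ k)]
    rw [prod_range_succ, Nat.factorial_succ, abs_of_nonneg (by push_cast; linarith)]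
    push_cast
    calc P * ((k : ℝ) + 1 - β) * ((k : ℝ) + 1 + 1) ^ (1 + β)
        = P * (((k : ℝ) + 1 - β) * ((k : ℝ) + 1 + 1) ^ (1 + β)) := by ring
      _ ≤ P * (((k : ℝ) + 1 + 1) * ((k : ℝ) + 1) ^ (1 + β)) :=
        mul_le_mul_of_nonneg_left (sub_mul_add_one_rpow_le (by positivity) hβ0 hβk hβ1) hP
      _ = ((k : ℝ) + 1 + 1) * (P * ((k : ℝ) + 1) ^ (1 + β)) := by ring
      _ ≤ ((k : ℝ) + 1 + 1) * (k + 1)! := by gcongr; exact_mod_cast ih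

/-- `|C(1-α,p)| = |Γ(p-1+α)/(Γ(α-1) p!)| ≤ e^{(1-α)²+(1-α)} / p^{2-α}`
for `0 < α < 1` and `p ≥ 1`. -/
theorem stmt_10 (α : ℝ) (hα0 : 0 < α) (hα1 : α < 1) (p : ℕ) (hp : 1 ≤ p) :
    |Real.Gamma ((p : ℝ) - 1 + α) / (Real.Gamma (α - 1) * (p.factorial : ℝ))| ≤
      Real.exp ((1 - α) ^ 2 + (1 - α)) / (p : ℝ) ^ ((2 : ℝ) - α) := by
  have hx : ∀ m : ℕ, α - 1 ≠ -m := by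
    rintro (_ | m) h
    · simp at h; linarith
    · push_cast at h; linarith [(m.cast_nonneg : (0 : ℝ) ≤ m)]
  have hquot : |Gamma ((p : ℝ) - 1 + α) / (Gamma (α - 1) * p.factorial)|
      = (∏ j ∈ range p, |(j : ℝ) - (1 - α)|) / p.factorial := by
    rw [show (p : ℝ) - 1 + α = α - 1 + p by ring, Gamma_add_nat_eq_mul_prod hx,
      mul_div_mul_left _ _ (Gamma_ne_zero hx), abs_div, abs_prod, Nat.abs_cast]
    congr 1
    exact prod_congr rfl fun j _ => by rw [show α - 1 + (j : ℝ) = j - (1 - α) by ring]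
  have hppos : (0 : ℝ) < p := by exact_mod_cast hp
  rw [hquot, div_le_div_iff₀ (by positivity) (rpow_pos_of_pos hppos _)]
  calc (∏ j ∈ range p, |(j : ℝ) - (1 - α)|) * (p : ℝ) ^ ((2 : ℝ) - α)
      = (∏ j ∈ range p, |(j : ℝ) - (1 - α)|) * (p : ℝ) ^ (1 + (1 - α)) := by
        rw [show (2 : ℝ) - α = 1 + (1 - α) by ring]
    _ ≤ p.factorial := prod_abs_nat_sub_mul_rpow_le_factorial (by linarith) (by linarith) p
    _ ≤ exp ((1 - α) ^ 2 + (1 - α)) * p.factorial := by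
      exact le_mul_of_one_le_left (by positivity)
        (one_le_exp (add_nonneg (sq_nonneg _) (by linarith)))
end

section
/- Let 0 < α < 1, let x ∈ C^2[a,b], and let N ≥ 1. Define R_N(τ) = ∑_{p=N+1}^∞ [Γ(p−1+α)/(Γ(α−1)p!)]·((τ−a)/(t−a))^p for a ≤ τ ≤ t ≤ b, and E_tr(t) = ((t−a)^(1−α)/Γ(2−α)) ∫_a^t R_N(τ) x''(τ) dτ. If L₂ = max_{τ∈[a,t]} |x''(τ)|, then |E_tr(t)| ≤ L₂ · e^((1−α)^2+1−α) · (t−a)^(2−α) / (Γ(2−α)(1−α)N^(1−α)). -/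
/-!
The coefficients `c_p = Γ(p-1+α)/(Γ(α-1) p!)` satisfy `c_1 = α - 1` and
`c_{p+1} = c_p (p-1+α)/(p+1)`, and the tangent-line inequality for the convex function
`y ↦ y^(α-1)` turns this recursion into `|c_p| ≤ (1-α) p^(α-2)`. The same tangent-line
inequality makes `∑_{p>N} (1-α) p^(α-2)` telescope to at most `N^(α-1)`, so `|R_N| ≤ N^(α-1)`
on `[a, t]`. Integrating against `x''` gives `|E_tr(t)| ≤ L₂ (t-a)^(2-α) / (Γ(2-α) N^(1-α))`,
which implies the claim because `1 - α ≤ e^((1-α)^2+1-α)`.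
-/

open MeasureTheory Set

theorem one_add_mul_le_rpow_one_add_of_nonpos {x r : ℝ} (hx : -1 < x) (hr : r ≤ 0) :
    1 + r * x ≤ (1 + x) ^ r := by
  have hpos : 0 < 1 + x := by linarith
  have hlog : Real.log (1 + x) ≤ x := by linarith [Real.log_le_sub_one_of_pos hpos]
  calc 1 + r * x ≤ r * Real.log (1 + x) + 1 := by nlinarith
    _ ≤ Real.exp (r * Real.log (1 + x)) := Real.add_one_le_exp _
    _ = (1 + x) ^ r := by rw [Real.rpow_def_of_pos hpos, mul_comm]

theorem rpow_add_mul_rpow_sub_one_mul_le_rpow {s u z : ℝ} (hs : s ≤ 0) (hu : 0 < u)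
    (hz : 0 < z) :
    u ^ s + s * u ^ (s - 1) * (z - u) ≤ z ^ s := by
  have hbern := one_add_mul_le_rpow_one_add_of_nonpos
    (show -1 < z / u - 1 by have := div_pos hz hu; linarith) hs
  rw [add_sub_cancel, Real.div_rpow hz.le hu.le] at hbern
  have hu' : 0 < u ^ s := Real.rpow_pos_of_pos hu s
  calc u ^ s + s * u ^ (s - 1) * (z - u) = u ^ s * (1 + s * (z / u - 1)) := by
        rw [Real.rpow_sub_one hu.ne']; field_simp
    _ ≤ u ^ s * (z ^ s / u ^ s) := by gcongr
    _ = z ^ s := by field_simp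

noncomputable def rlCoeff (α : ℝ) (p : ℕ) : ℝ :=
  Real.Gamma (p - 1 + α) / (Real.Gamma (α - 1) * p.factorial)

theorem rlCoeff_succ {α : ℝ} {p : ℕ} (h : (p : ℝ) - 1 + α ≠ 0) :
    rlCoeff α (p + 1) = rlCoeff α p * ((p - 1 + α) / (p + 1)) := by
  have hΓ : Real.Gamma (((p + 1 : ℕ) : ℝ) - 1 + α) = (p - 1 + α) * Real.Gamma (p - 1 + α) := by
    rw [← Real.Gamma_add_one h]; push_cast; ring_nf
  rw [rlCoeff, rlCoeff, hΓ, div_mul_div_comm, Nat.factorial_succ, Nat.cast_mul]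
  push_cast
  ring

theorem rlCoeff_one {α : ℝ} (hα : ∀ m : ℕ, α - 1 ≠ -m) : rlCoeff α 1 = α - 1 := by
  have hΓ : Real.Gamma (α - 1) ≠ 0 := Real.Gamma_ne_zero hα
  have h0 : α - 1 ≠ 0 := by simpa using hα 0
  have hΓα : Real.Gamma α = (α - 1) * Real.Gamma (α - 1) := by
    rw [← Real.Gamma_add_one h0, sub_add_cancel]
  simp only [rlCoeff, Nat.cast_one, sub_self, zero_add, Nat.factorial_one, mul_one, hΓα]
  field_simp

theorem abs_rlCoeff_le {α : ℝ} (hα0 : 0 < α) (hα1 : α < 1) {p : ℕ} (hp : 1 ≤ p) :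
    |rlCoeff α p| ≤ (1 - α) * (p : ℝ) ^ (α - 2) := by
  induction p, hp using Nat.le_induction with
  | base =>
    have hα : ∀ m : ℕ, α - 1 ≠ -m := by
      rintro (_ | m) h
      · simp at h; linarith
      · push_cast at h; linarith [(m.cast_nonneg : (0 : ℝ) ≤ m)]
    rw [rlCoeff_one hα]
    simp [abs_of_neg (sub_neg.2 hα1)]
  | succ p hp ih =>
    have hp' : (1 : ℝ) ≤ p := by exact_mod_cast hp
    have hp0 : (0 : ℝ) < p := by linarith
    have hratio : 0 < ((p : ℝ) - 1 + α) / (p + 1) := by apply div_pos <;> linarith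
    have htangent := rpow_add_mul_rpow_sub_one_mul_le_rpow (s := α - 1) (u := p) (z := p + 1)
      (by linarith) hp0 (by linarith)
    rw [rlCoeff_succ (by linarith), abs_mul, abs_of_pos hratio]
    calc |rlCoeff α p| * ((p - 1 + α) / (p + 1))
        ≤ (1 - α) * (p : ℝ) ^ (α - 2) * ((p - 1 + α) / (p + 1)) := by gcongr
      _ = (1 - α) * ((p : ℝ) ^ (α - 1) + (α - 1) * (p : ℝ) ^ (α - 1 - 1) * (p + 1 - p)) /
            (p + 1) := by
        rw [show α - 1 - 1 = α - 2 by ring, show α - 1 = α - 2 + 1 by ring,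
          Real.rpow_add_one hp0.ne']
        ring
      _ ≤ (1 - α) * ((p : ℝ) + 1) ^ (α - 1) / (p + 1) := by gcongr
      _ = (1 - α) * (((p + 1 : ℕ) : ℝ)) ^ (α - 2) := by
        push_cast
        rw [show α - 2 = α - 1 - 1 by ring, Real.rpow_sub_one (by positivity) (α - 1)]
        ring

theorem sum_range_rpow_sub_one_le {s y : ℝ} (hs : s ≤ 0) (hy : 0 < y) (M : ℕ) :
    ∑ q ∈ Finset.range M, -s * (y + q + 1) ^ (s - 1) ≤ y ^ s := by
  -- the tangent line at `y + q + 1`, evaluated at `y + q`, makes the sum telescope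
  have hstep : ∀ q : ℕ, -s * (y + q + 1) ^ (s - 1) ≤ (y + q) ^ s - (y + (q + 1 : ℕ)) ^ s := by
    intro q
    have := rpow_add_mul_rpow_sub_one_mul_le_rpow (u := y + q + 1) (z := y + q) hs
      (by positivity) (by positivity)
    rw [show y + q - (y + q + 1) = -1 by ring] at this
    rw [Nat.cast_succ, ← add_assoc]
    linarith
  calc ∑ q ∈ Finset.range M, -s * (y + q + 1) ^ (s - 1)
      ≤ ∑ q ∈ Finset.range M, ((y + q) ^ s - (y + (q + 1 : ℕ)) ^ s) :=
        Finset.sum_le_sum fun q _ => hstep q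
    _ = y ^ s - (y + M) ^ s := by
        rw [Finset.sum_range_sub' (fun q : ℕ => (y + q) ^ s)]; simp
    _ ≤ y ^ s := by linarith [Real.rpow_nonneg (by positivity : 0 ≤ y + M) s]

noncomputable def rlRemainder (α : ℝ) (N : ℕ) (r : ℝ) : ℝ :=
  ∑' q : ℕ, rlCoeff α (q + N + 1) * r ^ (q + N + 1)

theorem abs_rlRemainder_le {α : ℝ} (hα0 : 0 < α) (hα1 : α < 1) {N : ℕ} (hN : 1 ≤ N)
    {r : ℝ} (hr0 : 0 ≤ r) (hr1 : r ≤ 1) : |rlRemainder α N r| ≤ (N : ℝ) ^ (α - 1) := by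
  set g : ℕ → ℝ := fun q => (1 - α) * ((N : ℝ) + q + 1) ^ (α - 1 - 1)
  have hg : ∀ q, ‖rlCoeff α (q + N + 1) * r ^ (q + N + 1)‖ ≤ g q := fun q => by
    rw [Real.norm_eq_abs, abs_mul, abs_pow, abs_of_nonneg hr0]
    calc |rlCoeff α (q + N + 1)| * r ^ (q + N + 1) ≤ |rlCoeff α (q + N + 1)| * 1 := by
          gcongr; exact pow_le_one₀ hr0 hr1
      _ ≤ g q := by
          rw [mul_one]
          convert abs_rlCoeff_le hα0 hα1 (p := q + N + 1) (by omega) using 2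
          push_cast; ring_nf
  have hsum : ∀ M, ∑ q ∈ Finset.range M, g q ≤ (N : ℝ) ^ (α - 1) := by
    simpa using
      sum_range_rpow_sub_one_le (s := α - 1) (y := N) (by linarith) (by exact_mod_cast hN)
  have hg0 : ∀ q, 0 ≤ g q := fun q => (norm_nonneg _).trans (hg q)
  exact tsum_of_norm_bounded (summable_of_sum_range_le hg0 hsum).hasSum hg |>.trans
    (Real.tsum_le_of_sum_range_le hg0 hsum)

theorem abs_integral_rlRemainder_mul_le {α a t L : ℝ} (hα0 : 0 < α) (hα1 : α < 1) {N : ℕ}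
    (hN : 1 ≤ N) (hat : a < t) {f : ℝ → ℝ} (hf : ∀ τ ∈ Ioc a t, |f τ| ≤ L) :
    |∫ τ in a..t, rlRemainder α N ((τ - a) / (t - a)) * f τ| ≤
      (N : ℝ) ^ (α - 1) * L * (t - a) := by
  have hta : 0 < t - a := sub_pos.2 hat
  have hbound : ∀ τ ∈ uIoc a t,
      ‖rlRemainder α N ((τ - a) / (t - a)) * f τ‖ ≤ (N : ℝ) ^ (α - 1) * L := by
    intro τ hτ
    rw [uIoc_of_le hat.le] at hτ
    rw [Real.norm_eq_abs, abs_mul]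
    have hr0 : 0 ≤ (τ - a) / (t - a) := div_nonneg (by linarith [hτ.1]) hta.le
    have hr1 : (τ - a) / (t - a) ≤ 1 := (div_le_one hta).2 (by linarith [hτ.2])
    exact mul_le_mul (abs_rlRemainder_le hα0 hα1 hN hr0 hr1) (hf τ hτ) (abs_nonneg _)
      (by positivity)
  simpa [abs_of_pos hta] using intervalIntegral.norm_integral_le_of_norm_le_const hbound

theorem stmt_12_general (a b t α : ℝ) (N : ℕ) (hα0 : 0 < α) (hα1 : α < 1)
    (ht : t ∈ Ioc a b) (hN : 1 ≤ N)
    (x : ℝ → ℝ) (L₂ : ℝ)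
    (hL : IsGreatest ((fun τ => |iteratedDeriv 2 x τ|) '' Icc a t) L₂) :
    |(t - a) ^ ((1 : ℝ) - α) / Real.Gamma (2 - α) *
        ∫ τ in a..t,
          (∑' q : ℕ,
              Real.Gamma (((q : ℝ) + (N : ℝ) + 1) - 1 + α) /
                  (Real.Gamma (α - 1) * ((q + N + 1).factorial : ℝ)) *
                ((τ - a) / (t - a)) ^ (q + N + 1)) *
            iteratedDeriv 2 x τ| ≤
      L₂ * Real.exp ((1 - α) ^ 2 + 1 - α) * (t - a) ^ ((2 : ℝ) - α) /
        (Real.Gamma (2 - α) * (1 - α) * (N : ℝ) ^ ((1 : ℝ) - α)) := by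
  have hta : 0 < t - a := sub_pos.2 ht.1
  have hΓ : 0 < Real.Gamma (2 - α) := Real.Gamma_pos_of_pos (by linarith)
  have hN₀ : (0 : ℝ) < N := by exact_mod_cast hN
  have hL₀ : 0 ≤ L₂ := by
    obtain ⟨τ, -, rfl⟩ := hL.1
    exact abs_nonneg _
  have hL' : ∀ τ ∈ Ioc a t, |iteratedDeriv 2 x τ| ≤ L₂ := fun τ hτ =>
    hL.2 ⟨τ, Ioc_subset_Icc_self hτ, rfl⟩
  have hexp : 1 - α ≤ Real.exp ((1 - α) ^ 2 + 1 - α) := by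
    nlinarith [Real.add_one_le_exp ((1 - α) ^ 2 + 1 - α)]
  have hcoeff : ∀ q : ℕ, Real.Gamma (((q : ℝ) + (N : ℝ) + 1) - 1 + α) /
      (Real.Gamma (α - 1) * ((q + N + 1).factorial : ℝ)) = rlCoeff α (q + N + 1) := fun q => by
    simp [rlCoeff]
  simp only [hcoeff]
  rw [abs_mul, abs_of_pos (by positivity : 0 < (t - a) ^ ((1 : ℝ) - α) / Real.Gamma (2 - α))]
  calc _ ≤ (t - a) ^ ((1 : ℝ) - α) / Real.Gamma (2 - α) *
          ((N : ℝ) ^ (α - 1) * L₂ * (t - a)) := by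
        gcongr
        exact abs_integral_rlRemainder_mul_le hα0 hα1 hN ht.1 hL'
    _ = L₂ * (1 - α) * (t - a) ^ ((2 : ℝ) - α) /
          (Real.Gamma (2 - α) * (1 - α) * (N : ℝ) ^ ((1 : ℝ) - α)) := by
        rw [show (2 : ℝ) - α = 1 - α + 1 by ring, Real.rpow_add_one hta.ne',
          show α - 1 = -(1 - α) by ring, Real.rpow_neg hN₀.le]
        have : (1 : ℝ) - α ≠ 0 := by linarith
        field_simp
    _ ≤ _ := by gcongr

/-- truncation error bound for the moment expansion.  With
`R_N(τ) = ∑_{p=N+1}^∞ [Γ(p-1+α)/(Γ(α-1)p!)]((τ-a)/(t-a))^p` (reindexed by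
`q = p-(N+1)`) and `E_tr(t) = ((t-a)^{1-α}/Γ(2-α)) ∫_a^t R_N(τ) x''(τ) dτ`, one has
`|E_tr(t)| ≤ L₂ e^{(1-α)²+1-α} (t-a)^{2-α} / (Γ(2-α)(1-α)N^{1-α})`. -/
theorem stmt_12 (a b t α : ℝ) (N : ℕ) (hα0 : 0 < α) (hα1 : α < 1)
    (hab : a < b) (ht : t ∈ Ioc a b) (hN : 1 ≤ N)
    (x : ℝ → ℝ) (hx : ContDiffOn ℝ 2 x (Icc a b)) (L₂ : ℝ)
    (hL : IsGreatest ((fun τ => |iteratedDeriv 2 x τ|) '' Icc a t) L₂) :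
    |(t - a) ^ ((1 : ℝ) - α) / Real.Gamma (2 - α) *
        ∫ τ in a..t,
          (∑' q : ℕ,
              Real.Gamma (((q : ℝ) + (N : ℝ) + 1) - 1 + α) /
                  (Real.Gamma (α - 1) * ((q + N + 1).factorial : ℝ)) *
                ((τ - a) / (t - a)) ^ (q + N + 1)) *
            iteratedDeriv 2 x τ| ≤
      L₂ * Real.exp ((1 - α) ^ 2 + 1 - α) * (t - a) ^ ((2 : ℝ) - α) /
        (Real.Gamma (2 - α) * (1 - α) * (N : ℝ) ^ ((1 : ℝ) - α)) :=
  stmt_12_general a b t α N hα0 hα1 ht hN x L₂ hL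
end
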